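/- Let N ≥ 1, let v be a smooth vector field on ℝ^N and c : ℝ^N → ℝ a smooth function. For smooth covector fields α, β on ℝ^N define the bracket [α,β]_v := c·( β(v)·L_v α − α(v)·L_v β ). Then for all smooth functions f, g, h : ℝ^N → ℝ the cyclic Jacobi identity holds: [[df,dg]_v, dh]_v + [[dh,df]_v, dg]_v + [[dg,dh]_v, df]_v = 0. -/

import Mathlib

open scoped ContDiff

/-- Partial derivative `∂f/∂x_s` at `x`. -/
noncomputable def pd {N : ℕ} (s : Fin N) (f : (Fin N → ℝ) → ℝ) (x : Fin N → ℝ) : ℝ :=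
  fderiv ℝ f x (Pi.single s 1)

/-- Pairing `α(v) = ∑ s, α_s v_s` of a covector field with a vector field. -/
noncomputable def pairing {N : ℕ} (α v : (Fin N → ℝ) → (Fin N → ℝ)) (x : Fin N → ℝ) : ℝ :=
  ∑ s, α x s * v x s

/-- Lie derivative of a covector field `α` along a vector field `v`:
`(L_v α)_k = ∑ s (v_s ∂α_k/∂x_s + α_s ∂v_s/∂x_k)`. -/
noncomputable def lieD {N : ℕ} (v α : (Fin N → ℝ) → (Fin N → ℝ)) (x : Fin N → ℝ)
    (k : Fin N) : ℝ :=
  ∑ s, (v x s * pd s (fun y => α y k) x + α x s * pd k (fun y => v y s) x)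

/-- The differential `df`, with components `(df)_k = ∂f/∂x_k`. -/
noncomputable def dF {N : ℕ} (f : (Fin N → ℝ) → ℝ) (x : Fin N → ℝ) (k : Fin N) : ℝ :=
  pd k f x

/-- The bracket `[α,β]_v = c (β(v) L_v α − α(v) L_v β)`. -/
noncomputable def brktV {N : ℕ} (c : (Fin N → ℝ) → ℝ) (v : (Fin N → ℝ) → (Fin N → ℝ))
    (α β : (Fin N → ℝ) → (Fin N → ℝ)) (x : Fin N → ℝ) (k : Fin N) : ℝ :=
  c x * (pairing β v x * lieD v α x k - pairing α v x * lieD v β x k)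

/-!
The Lie derivative commutes with `d` (Cartan's formula; here it is the symmetry of second
partial derivatives), is a derivation with respect to multiplication by functions, and the
pairing is linear over functions. Hence `[df, dg]_v = c (v(g) d(v(f)) - v(f) d(v(g)))`, and the
iterated bracket `[[df, dg]_v, dh]_v` becomes a polynomial in `c`, `v(c)`, the iterated
derivatives `v(f), v(v(f)), …` and their differentials, whose cyclic sum cancels identically.
-/

section

variable {N : ℕ}

section PartialDerivatives

variable {f g : (Fin N → ℝ) → ℝ} {x : Fin N → ℝ}

theorem pd_fun_mul (k : Fin N) (hf : DifferentiableAt ℝ f x) (hg : DifferentiableAt ℝ g x) :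
    pd k (fun y => f y * g y) x = pd k f x * g x + f x * pd k g x := by
  simp only [pd, fderiv_fun_mul hf hg, add_apply, smul_apply, smul_eq_mul]
  ring

theorem pd_fun_sub (k : Fin N) (hf : DifferentiableAt ℝ f x) (hg : DifferentiableAt ℝ g x) :
    pd k (fun y => f y - g y) x = pd k f x - pd k g x := by
  simp only [pd, fderiv_fun_sub hf hg, sub_apply]

theorem pd_fun_sum {F : Fin N → (Fin N → ℝ) → ℝ} (k : Fin N)
    (hF : ∀ s, DifferentiableAt ℝ (F s) x) :
    pd k (fun y => ∑ s, F s y) x = ∑ s, pd k (F s) x := by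
  simp only [pd, fderiv_fun_sum fun s _ => hF s, FunLike.coe_sum, Finset.sum_apply]

theorem contDiff_pd (hf : ContDiff ℝ ∞ f) (s : Fin N) : ContDiff ℝ ∞ (pd s f) :=
  (hf.fderiv_right le_rfl).clm_apply contDiff_const

theorem differentiableAt_pd (hf : ContDiffAt ℝ 2 f x) (s : Fin N) :
    DifferentiableAt ℝ (pd s f) x :=
  ((hf.fderiv_right (m := 1) (by norm_num)).differentiableAt one_ne_zero).clm_apply
    (differentiableAt_const _)

theorem pd_pd_comm (hf : ContDiffAt ℝ 2 f x) (s k : Fin N) :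
    pd s (pd k f) x = pd k (pd s f) x := by
  have hdf := (hf.fderiv_right (m := 1) (by norm_num)).differentiableAt one_ne_zero
  have second (i j : Fin N) :
      pd i (pd j f) x = fderiv ℝ (fderiv ℝ f) x (Pi.single i 1) (Pi.single j 1) := by
    change fderiv ℝ (fun y => fderiv ℝ f y (Pi.single j 1)) x (Pi.single i 1) = _
    simp [fderiv_clm_apply hdf (differentiableAt_const _)]
  rw [second, second, hf.isSymmSndFDerivAt (by simp)]

end PartialDerivatives

section LieDerivative

variable {v : (Fin N → ℝ) → (Fin N → ℝ)} {x : Fin N → ℝ}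

noncomputable def dirDeriv (v : (Fin N → ℝ) → (Fin N → ℝ)) (f : (Fin N → ℝ) → ℝ)
    (x : Fin N → ℝ) : ℝ :=
  ∑ s, pd s f x * v x s

theorem pairing_dF (f : (Fin N → ℝ) → ℝ) : pairing (dF f) v x = dirDeriv v f x := rfl

theorem contDiff_dirDeriv (hv : ContDiff ℝ ∞ v) {f : (Fin N → ℝ) → ℝ} (hf : ContDiff ℝ ∞ f) :
    ContDiff ℝ ∞ (dirDeriv v f) :=
  ContDiff.sum fun s _ => (contDiff_pd hf s).mul (contDiff_pi.mp hv s)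

theorem dirDeriv_mul {φ ψ : (Fin N → ℝ) → ℝ} (hφ : DifferentiableAt ℝ φ x)
    (hψ : DifferentiableAt ℝ ψ x) :
    dirDeriv v (φ * ψ) x = dirDeriv v φ x * ψ x + φ x * dirDeriv v ψ x := by
  simp only [dirDeriv, Finset.sum_mul, Finset.mul_sum, ← Finset.sum_add_distrib]
  refine Finset.sum_congr rfl fun s _ => ?_
  rw [show φ * ψ = fun y => φ y * ψ y from rfl, pd_fun_mul s hφ hψ]
  ring

theorem pairing_smul (φ : (Fin N → ℝ) → ℝ) (α : (Fin N → ℝ) → (Fin N → ℝ)) :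
    pairing (φ • α) v x = φ x * pairing α v x := by
  simp only [pairing, Finset.mul_sum, Pi.smul_apply', Pi.smul_apply, smul_eq_mul, mul_assoc]

theorem pairing_sub (α β : (Fin N → ℝ) → (Fin N → ℝ)) :
    pairing (α - β) v x = pairing α v x - pairing β v x := by
  simp only [pairing, Pi.sub_apply, sub_mul, Finset.sum_sub_distrib]

theorem lieD_sub {α β : (Fin N → ℝ) → (Fin N → ℝ)}
    (hα : ∀ k, DifferentiableAt ℝ (fun y => α y k) x)
    (hβ : ∀ k, DifferentiableAt ℝ (fun y => β y k) x) (k : Fin N) :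
    lieD v (α - β) x k = lieD v α x k - lieD v β x k := by
  simp only [lieD, Pi.sub_apply, ← Finset.sum_sub_distrib]
  refine Finset.sum_congr rfl fun s _ => ?_
  rw [pd_fun_sub s (hα k) (hβ k)]
  ring

theorem lieD_smul {φ : (Fin N → ℝ) → ℝ} {α : (Fin N → ℝ) → (Fin N → ℝ)}
    (hφ : DifferentiableAt ℝ φ x) (hα : ∀ k, DifferentiableAt ℝ (fun y => α y k) x)
    (k : Fin N) :
    lieD v (φ • α) x k = dirDeriv v φ x * α x k + φ x * lieD v α x k := by
  simp only [lieD, dirDeriv, Pi.smul_apply', Pi.smul_apply, smul_eq_mul,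
    Finset.sum_mul, Finset.mul_sum, ← Finset.sum_add_distrib]
  refine Finset.sum_congr rfl fun s _ => ?_
  rw [pd_fun_mul s hφ (hα k)]
  ring

theorem lieD_dF (hv : DifferentiableAt ℝ v x) {f : (Fin N → ℝ) → ℝ} (hf : ContDiffAt ℝ 2 f x)
    (k : Fin N) : lieD v (dF f) x k = dF (dirDeriv v f) x k := by
  have hvs (s : Fin N) : DifferentiableAt ℝ (fun y => v y s) x := differentiableAt_pi.mp hv s
  unfold lieD dirDeriv dF
  rw [pd_fun_sum k fun s => (differentiableAt_pd hf s).fun_mul (hvs s)]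
  refine Finset.sum_congr rfl fun s _ => ?_
  rw [pd_fun_mul k (differentiableAt_pd hf s) (hvs s), pd_pd_comm hf]
  ring

end LieDerivative

section Bracket

variable {v : (Fin N → ℝ) → (Fin N → ℝ)} {c : (Fin N → ℝ) → ℝ}

theorem brktV_dF_dF (hv : Differentiable ℝ v) {f g : (Fin N → ℝ) → ℝ} (hf : ContDiff ℝ 2 f)
    (hg : ContDiff ℝ 2 g) :
    brktV c v (dF f) (dF g)
      = (c * dirDeriv v g) • dF (dirDeriv v f) - (c * dirDeriv v f) • dF (dirDeriv v g) := by
  funext x k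
  simp only [brktV, pairing_dF, lieD_dF (hv x) hf.contDiffAt, lieD_dF (hv x) hg.contDiffAt,
    Pi.sub_apply, Pi.smul_apply', Pi.mul_apply, Pi.smul_apply, smul_eq_mul]
  ring

theorem brktV_smul_dF_sub_smul_dF_dF {x : Fin N → ℝ} (hv : DifferentiableAt ℝ v x)
    {φ ψ A B h : (Fin N → ℝ) → ℝ} (hφ : DifferentiableAt ℝ φ x) (hψ : DifferentiableAt ℝ ψ x)
    (hA : ContDiffAt ℝ 2 A x) (hB : ContDiffAt ℝ 2 B x) (hh : ContDiffAt ℝ 2 h x) (k : Fin N) :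
    brktV c v (φ • dF A - ψ • dF B) (dF h) x k
      = c x * (dirDeriv v h x * (dirDeriv v φ x * dF A x k + φ x * dF (dirDeriv v A) x k
          - (dirDeriv v ψ x * dF B x k + ψ x * dF (dirDeriv v B) x k))
        - (φ x * dirDeriv v A x - ψ x * dirDeriv v B x) * dF (dirDeriv v h) x k) := by
  have hφA (i : Fin N) : DifferentiableAt ℝ (fun y => (φ • dF A) y i) x :=
    hφ.mul (differentiableAt_pd hA i)
  have hψB (i : Fin N) : DifferentiableAt ℝ (fun y => (ψ • dF B) y i) x :=
    hψ.mul (differentiableAt_pd hB i)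
  rw [brktV, pairing_dF, lieD_dF hv hh, pairing_sub, pairing_smul, pairing_smul, pairing_dF,
    pairing_dF, lieD_sub hφA hψB, lieD_smul (α := dF A) hφ (differentiableAt_pd hA),
    lieD_smul (α := dF B) hψ (differentiableAt_pd hB), lieD_dF hv hA, lieD_dF hv hB]

end Bracket

end

theorem stmt0_general {N : ℕ}
    (v : (Fin N → ℝ) → (Fin N → ℝ)) (hv : ContDiff ℝ ∞ v)
    (c : (Fin N → ℝ) → ℝ) (hc : ContDiff ℝ ∞ c)
    (f g h : (Fin N → ℝ) → ℝ)
    (hf : ContDiff ℝ ∞ f) (hg : ContDiff ℝ ∞ g) (hh : ContDiff ℝ ∞ h) :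
    ∀ (x : Fin N → ℝ) (k : Fin N),
      brktV c v (brktV c v (dF f) (dF g)) (dF h) x k
        + brktV c v (brktV c v (dF h) (dF f)) (dF g) x k
        + brktV c v (brktV c v (dF g) (dF h)) (dF f) x k = 0 := by
  intro x k
  have c2 {u : (Fin N → ℝ) → ℝ} (hu : ContDiff ℝ ∞ u) : ContDiff ℝ 2 u := hu.of_le (by decide)
  have diff {u : (Fin N → ℝ) → ℝ} (hu : ContDiff ℝ ∞ u) : Differentiable ℝ u :=
    hu.differentiable (by simp)
  have hv' : Differentiable ℝ v := hv.differentiable (by simp)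
  have hvD {u : (Fin N → ℝ) → ℝ} (hu : ContDiff ℝ ∞ u) : ContDiff ℝ ∞ (dirDeriv v u) :=
    contDiff_dirDeriv hv hu
  have outer {p q r : (Fin N → ℝ) → ℝ} (hp : ContDiff ℝ ∞ p) (hq : ContDiff ℝ ∞ q)
      (hr : ContDiff ℝ ∞ r) :=
    brktV_smul_dF_sub_smul_dF_dF (c := c) (φ := c * dirDeriv v q) (ψ := c * dirDeriv v p)
      (hv' x) (diff (hc.mul (hvD hq)) x) (diff (hc.mul (hvD hp)) x)
      (c2 (hvD hp)).contDiffAt (c2 (hvD hq)).contDiffAt (c2 hr).contDiffAt k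
  rw [brktV_dF_dF hv' (c2 hf) (c2 hg), brktV_dF_dF hv' (c2 hh) (c2 hf),
    brktV_dF_dF hv' (c2 hg) (c2 hh), outer hf hg hh, outer hh hf hg, outer hg hh hf,
    dirDeriv_mul (diff hc x) (diff (hvD hf) x), dirDeriv_mul (diff hc x) (diff (hvD hg) x),
    dirDeriv_mul (diff hc x) (diff (hvD hh) x)]
  simp only [Pi.mul_apply]
  ring

/-- the cyclic Jacobi identity for `[·,·]_v` on differentials of smooth
functions. -/
theorem stmt0 {N : ℕ} (hN : 1 ≤ N)
    (v : (Fin N → ℝ) → (Fin N → ℝ)) (hv : ContDiff ℝ ∞ v)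
    (c : (Fin N → ℝ) → ℝ) (hc : ContDiff ℝ ∞ c)
    (f g h : (Fin N → ℝ) → ℝ)
    (hf : ContDiff ℝ ∞ f) (hg : ContDiff ℝ ∞ g) (hh : ContDiff ℝ ∞ h) :
    ∀ (x : Fin N → ℝ) (k : Fin N),
      brktV c v (brktV c v (dF f) (dF g)) (dF h) x k
        + brktV c v (brktV c v (dF h) (dF f)) (dF g) x k
        + brktV c v (brktV c v (dF g) (dF h)) (dF f) x k = 0 :=
  stmt0_general v hv c hc f g h hf hg hh
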